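/- Let N be an odd positive integer. The N² phase space operators A(p,q), for (p,q) ∈ (ZMod N)², form an orthogonal family normalized so that (1/N)·tr(A(v)·A(w)) = δ_{v,w} for all v, w ∈ (ZMod N)²; in particular they form an orthogonal basis of the N×N complex matrices with respect to the Hilbert–Schmidt inner product. -/

import Mathlib

open Matrix BigOperators

noncomputable section

/-- `ω = exp(2πi/N)`, a primitive `N`-th root of unity. -/
def omegaN (N : ℕ) : ℂ := Complex.exp (2 * Real.pi * Complex.I / N)

/-- The shift operator `x(q)|k⟩ = |k+q⟩`. -/
def shiftOp (N : ℕ) [NeZero N] (q : ZMod N) : Matrix (ZMod N) (ZMod N) ℂ :=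
  Matrix.of fun k l => if k = l + q then 1 else 0

/-- The boost operator `z(p)|k⟩ = ω^{pk}|k⟩`. -/
def boostOp (N : ℕ) [NeZero N] (p : ZMod N) : Matrix (ZMod N) (ZMod N) ℂ :=
  Matrix.diagonal fun k => omegaN N ^ (p * k).val

/-- The Weyl operator `w(p,q) = ω^{−2⁻¹pq} z(p) x(q)`. -/
def weylOp (N : ℕ) [NeZero N] (p q : ZMod N) : Matrix (ZMod N) (ZMod N) ℂ :=
  omegaN N ^ ((-(2⁻¹ : ZMod N) * p * q).val) • (boostOp N p * shiftOp N q)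

/-- The parity operator `A(0,0)|x⟩ = |−x⟩`. -/
def parityOp (N : ℕ) [NeZero N] : Matrix (ZMod N) (ZMod N) ℂ :=
  Matrix.of fun k l => if k = -l then 1 else 0

/-- The phase space operators `A(p,q) = w(p,q) A(0,0) w(p,q)†`. -/
def phaseOp (N : ℕ) [NeZero N] (a : ZMod N × ZMod N) : Matrix (ZMod N) (ZMod N) ℂ :=
  weylOp N a.1 a.2 * parityOp N * (weylOp N a.1 a.2)ᴴ


/-! In the standard basis `A(p,q)` is a monomial matrix, `A(p,q)ₖₗ = ω^{p(k-l)}` if `k + l = 2q`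
and `0` otherwise. Hence the diagonal of `A(p,q) A(p',q')` vanishes unless `2q = 2q'`, and then
its `k`-th entry is `ω^{2(k-q)(p-p')}`; summing over `k` gives `N δ_{p,p'}` by orthogonality of
characters, because `2` is invertible modulo odd `N`. Nonzero trace-orthogonal matrices are
linearly independent, and there are `N² = dim` of them. -/

theorem Matrix.linearIndependent_of_trace_mul_eq_zero {K n ι : Type*} [Field K] [Fintype n]
    {A : ι → Matrix n n K} (hortho : Pairwise fun i j => (A i * A j).trace = 0)
    (hself : ∀ i, (A i * A i).trace ≠ 0) : LinearIndependent K A :=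
  LinearMap.BilinForm.linearIndependent_of_iIsOrtho
    (B := (LinearMap.mul K (Matrix n n K)).compr₂ (Matrix.traceLinearMap n K K)) hortho hself

open ZMod (stdAddChar)

section

variable (N : ℕ) [NeZero N]

lemma omegaN_pow_val (a : ZMod N) : omegaN N ^ a.val = stdAddChar a := by
  rw [ZMod.stdAddChar_apply, ZMod.toCircle_apply, omegaN, ← Complex.exp_nat_mul]
  ring_nf

lemma weylOp_apply (p q k l : ZMod N) :
    weylOp N p q k l = if l = k - q then stdAddChar (p * (k - 2⁻¹ * q)) else 0 := by
  have hkl : k = l + q ↔ l = k - q := (eq_sub_iff_add_eq.trans eq_comm).symm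
  simp only [weylOp, boostOp, shiftOp, Matrix.smul_apply, diagonal_mul, of_apply,
    omegaN_pow_val, hkl, mul_ite, mul_one, mul_zero, smul_eq_mul, ← AddChar.map_add_eq_mul]
  ring_nf

lemma mul_parityOp_apply (M : Matrix (ZMod N) (ZMod N) ℂ) (k l : ZMod N) :
    (M * parityOp N) k l = M k (-l) := by
  simp [mul_apply, parityOp]

lemma phaseOp_apply (p q k l : ZMod N) :
    phaseOp N (p, q) k l = if l = 2 * q - k then stdAddChar (p * (k - l)) else 0 := by
  rw [phaseOp, mul_apply]
  have hl : l - q = q - k ↔ l = 2 * q - k := by constructor <;> intro h <;> linear_combination h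
  simp only [mul_parityOp_apply, conjTranspose_apply, weylOp_apply, neg_eq_iff_eq_neg, neg_sub,
    ite_mul, zero_mul, Finset.sum_ite_eq', Finset.mem_univ, if_true, hl, apply_ite star, star_zero,
    mul_ite, mul_zero, Complex.star_def, ← AddChar.map_neg_eq_conj, ← AddChar.map_add_eq_mul]
  split_ifs
  · congr 1; ring
  · rfl

lemma phaseOp_mul_phaseOp_apply_self (h2 : IsUnit (2 : ZMod N)) (p q p' q' k : ZMod N) :
    (phaseOp N (p, q) * phaseOp N (p', q')) k k
      = if q = q' then stdAddChar ((k - q) * (2 * (p - p'))) else 0 := by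
  have hq : k = 2 * q' - (2 * q - k) ↔ q = q' := by
    rw [← h2.mul_right_inj (b := q)]
    constructor <;> intro h <;> linear_combination h
  simp only [mul_apply, phaseOp_apply, ite_mul, zero_mul, Finset.sum_ite_eq', Finset.mem_univ,
    if_true]
  simp only [hq, mul_ite, mul_zero, ← AddChar.map_add_eq_mul]
  split_ifs
  · congr 1; ring
  · rfl

lemma trace_phaseOp_mul_phaseOp (h2 : IsUnit (2 : ZMod N)) (v w : ZMod N × ZMod N) :
    (phaseOp N v * phaseOp N w).trace = if v = w then (N : ℂ) else 0 := by
  obtain ⟨p, q⟩ := v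
  obtain ⟨p', q'⟩ := w
  simp only [trace, diag_apply, phaseOp_mul_phaseOp_apply_self N h2, Prod.mk.injEq]
  by_cases hq : q = q'
  · have hp : 2 * (p - p') = 0 ↔ p = p' := by
      rw [h2.mul_right_eq_zero, sub_eq_zero]
    simp only [hq, and_true, if_true]
    have hshift : ∑ k, stdAddChar ((k - q') * (2 * (p - p')))
        = ∑ k, stdAddChar (k * (2 * (p - p'))) :=
      Fintype.sum_equiv (Equiv.subRight q') _ _ fun _ => rfl
    rw [hshift, AddChar.sum_mulShift _ (ZMod.isPrimitive_stdAddChar N)]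
    simp only [hp, ZMod.card, Nat.cast_ite, Nat.cast_zero]
  · simp [hq]

end

/-- for odd `N`, the `N²` phase space operators satisfy
`(1/N)·tr(A(v)·A(w)) = δ_{v,w}`; in particular they are linearly independent and
span the space of `N × N` complex matrices, i.e. they form an orthogonal basis
with respect to the Hilbert–Schmidt inner product. -/
theorem phaseOp_orthogonal_basis (N : ℕ) [NeZero N] (hN : Odd N) :
    (∀ v w : ZMod N × ZMod N,
        (1 / (N : ℂ)) * (phaseOp N v * phaseOp N w).trace = if v = w then 1 else 0)
    ∧ LinearIndependent ℂ (phaseOp N)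
    ∧ Submodule.span ℂ (Set.range (phaseOp N)) = ⊤ := by
  have h2 : IsUnit (2 : ZMod N) := by
    simpa using (ZMod.isUnit_iff_coprime 2 N).mpr (Nat.coprime_two_left.mpr hN)
  have hN0 : (N : ℂ) ≠ 0 := Nat.cast_ne_zero.mpr (NeZero.ne N)
  have htrace := trace_phaseOp_mul_phaseOp N h2
  have hli : LinearIndependent ℂ (phaseOp N) :=
    linearIndependent_of_trace_mul_eq_zero (fun v w hvw => by simp [htrace, hvw])
      (fun v => by simp [htrace, hN0])
  refine ⟨fun v w => ?_, hli, hli.span_eq_top_of_card_eq_finrank ?_⟩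
  · rw [htrace]
    split_ifs
    · exact one_div_mul_cancel hN0
    · exact mul_zero _
  · simp [Module.finrank_matrix, ZMod.card]
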